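/- arXiv:2209.13141 — 6 statements merged into one kernel-verified Lean document; each statement's English description precedes it below -/
import Mathlib

section
/- On sl₂(ℂ) with standard basis e,f,h satisfying [e,f]=h, [h,e]=2e, [h,f]=-2f, the linear operator R defined by R(e)=0, R(f)=te-h, R(h)=2e (for a fixed t ∈ ℂ) is a Rota–Baxter operator of weight 0. -/
/-- On `sl₂(ℂ)` with standard basis `e, f, h`, the operator `R(e)=0`,
`R(f)=t•e-h`, `R(h)=2e` is a Rota–Baxter operator of weight `0`. -/
theorem stmt4 {L : Type*} [LieRing L] [LieAlgebra ℂ L] (e f h : L)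
    (hef : ⁅e, f⁆ = h) (hhe : ⁅h, e⁆ = (2 : ℂ) • e) (hhf : ⁅h, f⁆ = -((2 : ℂ) • f))
    (hind : LinearIndependent ℂ ![e, f, h])
    (hspan : Submodule.span ℂ {e, f, h} = ⊤)
    (t : ℂ) (R : L →ₗ[ℂ] L)
    (hRe : R e = 0) (hRf : R f = t • e - h) (hRh : R h = (2 : ℂ) • e) :
    ∀ a b : L, ⁅R a, R b⁆ = R (⁅R a, b⁆ + ⁅a, R b⁆) := by
  have hee : ⁅e, e⁆ = 0 := lie_self e
  have hff : ⁅f, f⁆ = 0 := lie_self f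
  have hhh : ⁅h, h⁆ = 0 := lie_self h
  have heh : ⁅e, h⁆ = -((2:ℂ) • e) := by rw [← lie_skew, hhe]
  have hfe : ⁅f, e⁆ = -h := by rw [← lie_skew, hef]
  have hfh : ⁅f, h⁆ = (2:ℂ) • f := by rw [← lie_skew, hhf, neg_neg]
  -- bilinear difference map
  set D : L →ₗ[ℂ] L →ₗ[ℂ] L := LinearMap.mk₂ ℂ
    (fun a b => ⁅R a, R b⁆ - R (⁅R a, b⁆ + ⁅a, R b⁆))
    (by intro a a' b; simp only [map_add, add_lie, lie_add]; abel)
    (by intro c a b; simp only [map_smul, map_add, smul_lie, lie_smul, smul_add, smul_sub])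
    (by intro a b b'; simp only [map_add, add_lie, lie_add]; abel)
    (by intro c a b; simp only [map_smul, map_add, smul_lie, lie_smul, smul_add, smul_sub])
    with hD
  have hbasis : ∀ x ∈ ({e, f, h} : Set L), ∀ y ∈ ({e, f, h} : Set L), D x y = 0 := by
    intro x hx y hy
    simp only [Set.mem_insert_iff, Set.mem_singleton_iff] at hx hy
    rcases hx with rfl | rfl | rfl <;> rcases hy with rfl | rfl | rfl <;>
      simp only [hD, LinearMap.mk₂_apply, hRe, hRf, hRh, hee, hff, hhh, hef, hhe, hhf,
        heh, hfe, hfh, zero_lie, lie_zero, sub_lie, lie_sub, smul_lie, lie_smul,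
        add_lie, lie_add, neg_lie, lie_neg, map_add, map_sub, map_smul, map_neg,
        map_zero, smul_zero, smul_neg, smul_smul, smul_sub, sub_zero, zero_sub,
        add_zero, zero_add, neg_zero, neg_neg] <;>
      module
  have hzero : D = 0 := by
    apply LinearMap.ext_on hspan
    intro x hx
    apply LinearMap.ext_on hspan
    intro y hy
    simpa using hbasis x hx y hy
  intro a b
  have h2 := DFunLike.congr_fun (DFunLike.congr_fun hzero a) b
  simp only [hD, LinearMap.mk₂_apply, LinearMap.zero_apply, sub_eq_zero] at h2
  exact h2
end

section
/- On sl₂(ℂ) with standard basis e,f,h, for any t ∈ ℂ the linear operator R defined by R(e)=-e, R(f)=0, R(h)=t·h is a Rota–Baxter operator of weight 1. -/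
/-- On `sl₂(ℂ)` with standard basis `e, f, h`, for any `t ∈ ℂ` the operator
`R(e)=-e`, `R(f)=0`, `R(h)=t•h` is a Rota–Baxter operator of weight `1`. -/
theorem stmt8 {L : Type*} [LieRing L] [LieAlgebra ℂ L] (e f h : L)
    (hef : ⁅e, f⁆ = h) (hhe : ⁅h, e⁆ = (2 : ℂ) • e) (hhf : ⁅h, f⁆ = -((2 : ℂ) • f))
    (hind : LinearIndependent ℂ ![e, f, h])
    (hspan : Submodule.span ℂ {e, f, h} = ⊤)
    (t : ℂ) (R : L →ₗ[ℂ] L)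
    (hRe : R e = -e) (hRf : R f = 0) (hRh : R h = t • h) :
    ∀ a b : L, ⁅R a, R b⁆ = R (⁅R a, b⁆ + ⁅a, R b⁆ + ⁅a, b⁆) := by
  have hfe : ⁅f, e⁆ = -h := by rw [← lie_skew, hef]
  have heh : ⁅e, h⁆ = -((2 : ℂ) • e) := by rw [← lie_skew, hhe]
  have hfh : ⁅f, h⁆ = (2 : ℂ) • f := by rw [← lie_skew, hhf, neg_neg]
  have key : ∀ a ∈ Submodule.span ℂ {e, f, h}, ∀ b ∈ Submodule.span ℂ {e, f, h},
      ⁅R a, R b⁆ = R (⁅R a, b⁆ + ⁅a, R b⁆ + ⁅a, b⁆) := by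
    intro a ha
    induction ha using Submodule.span_induction with
    | mem x hx =>
      intro b hb
      induction hb using Submodule.span_induction with
      | mem y hy =>
        rcases hx with rfl | rfl | rfl <;> rcases hy with rfl | rfl | rfl <;>
          simp [hRe, hRf, hRh, hef, hfe, hhe, hhf, heh, hfh, smul_lie, lie_smul,
            map_add, map_smul, map_neg, smul_neg, neg_smul, smul_smul, lie_self]
      | zero => simp
      | add y z _ _ ihy ihz =>
        simp only [map_add, lie_add]
        rw [ihy, ihz, ← map_add]
        simp only [map_add]; abel
      | smul c y _ ihy =>
        simp only [map_smul, lie_smul]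
        rw [ihy, ← map_smul]
        congr 1; rw [smul_add, smul_add]
    | zero => intro b hb; simp
    | add x y _ _ ihx ihy =>
      intro b hb
      simp only [map_add, add_lie]
      rw [ihx b hb, ihy b hb, ← map_add]
      simp only [map_add]; abel
    | smul c x _ ihx =>
      intro b hb
      simp only [map_smul, smul_lie]
      rw [ihx b hb, ← map_smul]
      congr 1; rw [smul_add, smul_add]
  intro a b
  exact key a (hspan ▸ Submodule.mem_top) b (hspan ▸ Submodule.mem_top)
end

section
/- Let q(∂) ∈ ℂ[∂] and α ∈ ℂ. Define a ℂ[∂]-linear operator R on L = ℂ[∂] ⊗ sl₂(ℂ) by R(e) = 0, R(f) = q(∂)e + αh, R(h) = -2αe (extended ℂ[∂]-linearly), where the product on L is (p(∂)⊗a)·_λ(q(∂)⊗b) = p(-λ)q(λ+∂)⊗[a,b]. Then R satisfies the conformal Rota–Baxter identity of weight 0: [R(x)_λ R(y)] = R([R(x)_λ y] + [x_λ R(y)]) for all x,y ∈ L. -/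
open TensorProduct Polynomial

/-- On `L = Cur(sl₂(ℂ)) = ℂ[∂] ⊗ sl₂(ℂ)` with λ-bracket
`[p(∂)a _λ q(∂)b] = p(-λ)q(λ+∂) ⊗ ⁅a,b⁆`, the `ℂ[∂]`-linear operator with
`R(e) = 0`, `R(f) = q(∂)e + αh`, `R(h) = -2αe` is a conformal Rota–Baxter
operator of weight `0`. -/
theorem stmt15 {g : Type*} [LieRing g] [LieAlgebra ℂ g]
    (e f h : g)
    (hef : ⁅e, f⁆ = h) (hhe : ⁅h, e⁆ = (2 : ℂ) • e) (hhf : ⁅h, f⁆ = -((2 : ℂ) • f))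
    (hind : LinearIndependent ℂ ![e, f, h])
    (hspan : Submodule.span ℂ {e, f, h} = ⊤)
    (q : Polynomial ℂ) (α : ℂ)
    -- the λ-bracket, one bilinear map for each value of λ:
    (B : ℂ → (Polynomial ℂ ⊗[ℂ] g) →ₗ[ℂ] (Polynomial ℂ ⊗[ℂ] g) →ₗ[ℂ] (Polynomial ℂ ⊗[ℂ] g))
    (hB : ∀ (l : ℂ) (p r : Polynomial ℂ) (a b : g),
      B l (p ⊗ₜ[ℂ] a) (r ⊗ₜ[ℂ] b)
        = (Polynomial.C (p.eval (-l)) * r.comp (X + Polynomial.C l)) ⊗ₜ[ℂ] ⁅a, b⁆)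
    -- the operator `R`, given ℂ[∂]-linearly on the basis `e, f, h`:
    (R : (Polynomial ℂ ⊗[ℂ] g) →ₗ[ℂ] (Polynomial ℂ ⊗[ℂ] g))
    (hRe : ∀ p : Polynomial ℂ, R (p ⊗ₜ[ℂ] e) = 0)
    (hRf : ∀ p : Polynomial ℂ, R (p ⊗ₜ[ℂ] f) = (p * q) ⊗ₜ[ℂ] e + α • (p ⊗ₜ[ℂ] h))
    (hRh : ∀ p : Polynomial ℂ, R (p ⊗ₜ[ℂ] h) = (-(2 * α)) • (p ⊗ₜ[ℂ] e)) :
    ∀ (l : ℂ) (x y : Polynomial ℂ ⊗[ℂ] g),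
      B l (R x) (R y) = R (B l (R x) y + B l x (R y)) := by
  -- derived bracket relations
  have hee : ⁅e, e⁆ = (0 : g) := lie_self e
  have hff : ⁅f, f⁆ = (0 : g) := lie_self f
  have hhh : ⁅h, h⁆ = (0 : g) := lie_self h
  have hfe : ⁅f, e⁆ = -h := by rw [← lie_skew, hef]
  have heh : ⁅e, h⁆ = -((2:ℂ) • e) := by rw [← lie_skew, hhe]
  have hfh : ⁅f, h⁆ = (2:ℂ) • f := by rw [← lie_skew, hhf, neg_neg]
  -- extensionality from the spanning set
  have ext1 : ∀ (Φ Ψ : (Polynomial ℂ ⊗[ℂ] g) →ₗ[ℂ] (Polynomial ℂ ⊗[ℂ] g)),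
      (∀ (p : Polynomial ℂ) (a : g), (a = e ∨ a = f ∨ a = h) → Φ (p ⊗ₜ[ℂ] a) = Ψ (p ⊗ₜ[ℂ] a)) →
      Φ = Ψ := by
    intro Φ Ψ H
    apply TensorProduct.ext'
    intro p a
    have ha : a ∈ Submodule.span ℂ ({e, f, h} : Set g) := by rw [hspan]; trivial
    induction ha using Submodule.span_induction with
    | mem v hv =>
      rcases hv with rfl | rfl | rfl
      · exact H p _ (Or.inl rfl)
      · exact H p _ (Or.inr (Or.inl rfl))
      · exact H p _ (Or.inr (Or.inr rfl))
    | zero => simp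
    | add v w _ _ hv hw => rw [tmul_add, map_add, map_add, hv, hw]
    | smul c v _ hv => rw [tmul_smul, map_smul, map_smul, hv]
  intro l
  have key : ∀ (p r : Polynomial ℂ) (a b : g), (a = e ∨ a = f ∨ a = h) →
      (b = e ∨ b = f ∨ b = h) →
      B l (R (p ⊗ₜ[ℂ] a)) (R (r ⊗ₜ[ℂ] b))
        = R (B l (R (p ⊗ₜ[ℂ] a)) (r ⊗ₜ[ℂ] b) + B l (p ⊗ₜ[ℂ] a) (R (r ⊗ₜ[ℂ] b))) := by
    rintro p r a b (rfl | rfl | rfl) (rfl | rfl | rfl) <;>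
      simp only [hRe, hRf, hRh, map_add, map_smul, map_zero, LinearMap.add_apply,
        LinearMap.smul_apply, LinearMap.zero_apply, hB, hee, hff, hhh, hef, hfe, heh, hfh,
        hhe, hhf, tmul_zero, tmul_smul, tmul_neg, smul_zero, add_zero, zero_add, smul_neg,
        smul_smul, neg_zero, smul_add, neg_neg, neg_add_rev, map_neg, eval_mul, mul_comp,
        map_mul] <;>
      module
  intro x y
  have step1 : ∀ (p : Polynomial ℂ) (a : g), (a = e ∨ a = f ∨ a = h) → ∀ z,
      B l (R (p ⊗ₜ[ℂ] a)) (R z) = R (B l (R (p ⊗ₜ[ℂ] a)) z + B l (p ⊗ₜ[ℂ] a) (R z)) := by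
    intro p a ha
    have hmaps := ext1 ((B l (R (p ⊗ₜ[ℂ] a))).comp R)
        (R.comp ((B l (R (p ⊗ₜ[ℂ] a))) + (B l (p ⊗ₜ[ℂ] a)).comp R))
        (by intro r b hb; simpa using key p r a b ha hb)
    intro z
    simpa using LinearMap.congr_fun hmaps z
  have hmaps2 := ext1 (((B l).flip (R y)).comp R)
      (R.comp ((((B l).flip y).comp R) + ((B l).flip (R y))))
      (by intro p a ha; simpa using step1 p a ha y)
  simpa using LinearMap.congr_fun hmaps2 x
end

section
/- Let q(∂) ∈ ℂ[∂]. Define a ℂ[∂]-linear operator R on L = ℂ[∂] ⊗ sl₂(ℂ) by R(e) = 0, R(f) = 0, R(h) = q(∂)h. Then R satisfies the conformal Rota–Baxter identity of weight 0: [R(x)_λ R(y)] = R([R(x)_λ y] + [x_λ R(y)]) for all x,y ∈ L. -/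
open TensorProduct Polynomial

/-- On `L = Cur(sl₂(ℂ)) = ℂ[∂] ⊗ sl₂(ℂ)` with λ-bracket
`[p(∂)a _λ q(∂)b] = p(-λ)q(λ+∂) ⊗ ⁅a,b⁆`, the `ℂ[∂]`-linear operator with
`R(e) = 0`, `R(f) = 0`, `R(h) = q(∂)h` is a conformal Rota–Baxter
operator of weight `0`. -/
theorem stmt16 {g : Type*} [LieRing g] [LieAlgebra ℂ g]
    (e f h : g)
    (hef : ⁅e, f⁆ = h) (hhe : ⁅h, e⁆ = (2 : ℂ) • e) (hhf : ⁅h, f⁆ = -((2 : ℂ) • f))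
    (hind : LinearIndependent ℂ ![e, f, h])
    (hspan : Submodule.span ℂ {e, f, h} = ⊤)
    (q : Polynomial ℂ)
    -- the λ-bracket, one bilinear map for each value of λ:
    (B : ℂ → (Polynomial ℂ ⊗[ℂ] g) →ₗ[ℂ] (Polynomial ℂ ⊗[ℂ] g) →ₗ[ℂ] (Polynomial ℂ ⊗[ℂ] g))
    (hB : ∀ (l : ℂ) (p r : Polynomial ℂ) (a b : g),
      B l (p ⊗ₜ[ℂ] a) (r ⊗ₜ[ℂ] b)
        = (Polynomial.C (p.eval (-l)) * r.comp (X + Polynomial.C l)) ⊗ₜ[ℂ] ⁅a, b⁆)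
    -- the operator `R`, given ℂ[∂]-linearly on the basis `e, f, h`:
    (R : (Polynomial ℂ ⊗[ℂ] g) →ₗ[ℂ] (Polynomial ℂ ⊗[ℂ] g))
    (hRe : ∀ p : Polynomial ℂ, R (p ⊗ₜ[ℂ] e) = 0)
    (hRf : ∀ p : Polynomial ℂ, R (p ⊗ₜ[ℂ] f) = 0)
    (hRh : ∀ p : Polynomial ℂ, R (p ⊗ₜ[ℂ] h) = (p * q) ⊗ₜ[ℂ] h) :
    ∀ (l : ℂ) (x y : Polynomial ℂ ⊗[ℂ] g),
      B l (R x) (R y) = R (B l (R x) y + B l x (R y)) := by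
  intro l x y
  have heh : ⁅e, h⁆ = -((2 : ℂ) • e) := by rw [← lie_skew, hhe]
  have hfh : ⁅f, h⁆ = (2 : ℂ) • f := by rw [← lie_skew, hhf]; simp
  set T : Set (Polynomial ℂ ⊗[ℂ] g) :=
    {z | ∃ p : Polynomial ℂ, ∃ a ∈ ({e, f, h} : Set g), z = p ⊗ₜ[ℂ] a} with hT
  have hTspan : Submodule.span ℂ T = ⊤ := by
    rw [eq_top_iff, ← TensorProduct.span_tmul_eq_top ℂ (Polynomial ℂ) g, Submodule.span_le]
    rintro z ⟨p, n, rfl⟩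
    have hn : n ∈ Submodule.span ℂ ({e, f, h} : Set g) := by rw [hspan]; trivial
    induction hn using Submodule.span_induction with
    | mem a ha => exact Submodule.subset_span ⟨p, a, ha, rfl⟩
    | zero => simp
    | add a b _ _ ha hb =>
        rw [TensorProduct.tmul_add]; exact Submodule.add_mem _ ha hb
    | smul c a _ ha =>
        rw [TensorProduct.tmul_smul]; exact Submodule.smul_mem _ c ha
  have key : (LinearMap.compl₂ ((B l).comp R) R)
      = ((((B l).comp R) + (LinearMap.compl₂ (B l) R)).compr₂ R) := by
    apply LinearMap.ext_on hTspan
    intro x hx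
    apply LinearMap.ext_on hTspan
    intro y hy
    obtain ⟨p, a, ha, rfl⟩ := hx
    obtain ⟨r, b, hb, rfl⟩ := hy
    simp only [LinearMap.compl₂_apply, LinearMap.compr₂_apply, LinearMap.comp_apply,
      LinearMap.add_apply]
    rcases ha with rfl | rfl | rfl <;> rcases hb with rfl | rfl | rfl
    · simp [hRe]
    · simp [hRe, hRf]
    · -- a = e, b = h
      rw [hRe, hRh, hB, heh]
      simp only [map_zero, LinearMap.zero_apply, zero_add, map_add]
      rw [← neg_smul, TensorProduct.tmul_smul, map_smul, hRe, smul_zero]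
    · simp [hRe, hRf]
    · simp [hRf]
    · -- a = f, b = h
      rw [hRf, hRh, hB, hfh]
      simp only [map_zero, LinearMap.zero_apply, zero_add, map_add]
      rw [TensorProduct.tmul_smul, map_smul, hRf, smul_zero]
    · -- a = h, b = e
      rw [hRh, hRe, hB, hhe]
      simp only [map_zero, add_zero]
      rw [TensorProduct.tmul_smul, map_smul, hRe, smul_zero]
    · -- a = h, b = f
      rw [hRh, hRf, hB, hhf]
      simp only [map_zero, add_zero]
      rw [← neg_smul, TensorProduct.tmul_smul, map_smul, hRf, smul_zero]
    · -- a = h, b = h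
      rw [hRh, hRh, hB, hB, hB, lie_self]
      simp [TensorProduct.tmul_zero]
  have := LinearMap.congr_fun (LinearMap.congr_fun key x) y
  simpa using this
end

section
/- Let q(∂) ∈ ℂ[∂]. Define a ℂ[∂]-linear operator R on L = ℂ[∂] ⊗ sl₂(ℂ) by R(e) = -e, R(f) = 0, R(h) = q(∂)h. Then R satisfies the conformal Rota–Baxter identity of weight 1: [R(x)_λ R(y)] = R([R(x)_λ y] + [x_λ R(y)] + [x_λ y]) for all x,y ∈ L. -/
open TensorProduct Polynomial

/-- On `L = Cur(sl₂(ℂ)) = ℂ[∂] ⊗ sl₂(ℂ)` with λ-bracket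
`[p(∂)a _λ q(∂)b] = p(-λ)q(λ+∂) ⊗ ⁅a,b⁆`, the `ℂ[∂]`-linear operator with
`R(e) = -e`, `R(f) = 0`, `R(h) = q(∂)h` is a conformal Rota–Baxter
operator of weight `1`. -/
theorem stmt17 {g : Type*} [LieRing g] [LieAlgebra ℂ g]
    (e f h : g)
    (hef : ⁅e, f⁆ = h) (hhe : ⁅h, e⁆ = (2 : ℂ) • e) (hhf : ⁅h, f⁆ = -((2 : ℂ) • f))
    (hind : LinearIndependent ℂ ![e, f, h])
    (hspan : Submodule.span ℂ {e, f, h} = ⊤)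
    (q : Polynomial ℂ)
    -- the λ-bracket, one bilinear map for each value of λ:
    (B : ℂ → (Polynomial ℂ ⊗[ℂ] g) →ₗ[ℂ] (Polynomial ℂ ⊗[ℂ] g) →ₗ[ℂ] (Polynomial ℂ ⊗[ℂ] g))
    (hB : ∀ (l : ℂ) (p r : Polynomial ℂ) (a b : g),
      B l (p ⊗ₜ[ℂ] a) (r ⊗ₜ[ℂ] b)
        = (Polynomial.C (p.eval (-l)) * r.comp (X + Polynomial.C l)) ⊗ₜ[ℂ] ⁅a, b⁆)
    -- the operator `R`, given ℂ[∂]-linearly on the basis `e, f, h`: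
    (R : (Polynomial ℂ ⊗[ℂ] g) →ₗ[ℂ] (Polynomial ℂ ⊗[ℂ] g))
    (hRe : ∀ p : Polynomial ℂ, R (p ⊗ₜ[ℂ] e) = -(p ⊗ₜ[ℂ] e))
    (hRf : ∀ p : Polynomial ℂ, R (p ⊗ₜ[ℂ] f) = 0)
    (hRh : ∀ p : Polynomial ℂ, R (p ⊗ₜ[ℂ] h) = (p * q) ⊗ₜ[ℂ] h) :
    ∀ (l : ℂ) (x y : Polynomial ℂ ⊗[ℂ] g),
      B l (R x) (R y) = R (B l (R x) y + B l x (R y) + B l x y) := by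
  intro l x y
  have hfe : ⁅f, e⁆ = -h := by rw [← lie_skew, hef]
  have heh : ⁅e, h⁆ = -((2 : ℂ) • e) := by rw [← lie_skew, hhe]
  have hfh : ⁅f, h⁆ = (2 : ℂ) • f := by rw [← lie_skew, hhf, neg_neg]
  -- key computation on pure tensors with basis Lie elements
  have key : ∀ (p r : Polynomial ℂ) (a b : g), a ∈ ({e, f, h} : Set g) →
      b ∈ ({e, f, h} : Set g) →
      B l (R (p ⊗ₜ[ℂ] a)) (R (r ⊗ₜ[ℂ] b))
        = R (B l (R (p ⊗ₜ[ℂ] a)) (r ⊗ₜ[ℂ] b) + B l (p ⊗ₜ[ℂ] a) (R (r ⊗ₜ[ℂ] b))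
            + B l (p ⊗ₜ[ℂ] a) (r ⊗ₜ[ℂ] b)) := by
    intro p r a b ha hb
    rcases ha with rfl | rfl | rfl <;> rcases hb with rfl | rfl | rfl <;>
      simp [hRe, hRf, hRh, hB, hef, hfe, heh, hfh, hhe, hhf, tmul_neg, neg_tmul,
        tmul_smul, smul_tmul', mul_comp, eval_mul, mul_assoc, mul_left_comm, mul_comm,
        add_comm, TensorProduct.tmul_add, TensorProduct.add_tmul, smul_smul]
  -- extend to pure tensors with arbitrary Lie elements, by span induction
  have key2 : ∀ (p r : Polynomial ℂ) (a b : g),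
      B l (R (p ⊗ₜ[ℂ] a)) (R (r ⊗ₜ[ℂ] b))
        = R (B l (R (p ⊗ₜ[ℂ] a)) (r ⊗ₜ[ℂ] b) + B l (p ⊗ₜ[ℂ] a) (R (r ⊗ₜ[ℂ] b))
            + B l (p ⊗ₜ[ℂ] a) (r ⊗ₜ[ℂ] b)) := by
    intro p r a b
    have ha : a ∈ Submodule.span ℂ ({e, f, h} : Set g) := by rw [hspan]; trivial
    have hb : b ∈ Submodule.span ℂ ({e, f, h} : Set g) := by rw [hspan]; trivial
    induction ha using Submodule.span_induction with
    | mem a' ha' =>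
      induction hb using Submodule.span_induction with
      | mem b' hb' => exact key p r a' b' ha' hb'
      | zero => simp
      | add b1 b2 _ _ h1 h2 =>
        rw [tmul_add]
        simp only [map_add, h1, h2]
        abel
      | smul c b1 _ h1 =>
        rw [tmul_smul]
        simp only [map_smul, LinearMap.smul_apply]
        rw [← smul_add, ← smul_add, map_smul, h1]
    | zero => simp
    | add a1 a2 _ _ h1 h2 =>
      rw [tmul_add]
      simp only [map_add, LinearMap.add_apply, h1, h2]
      abel
    | smul c a1 _ h1 =>
      rw [tmul_smul]
      simp only [map_smul, LinearMap.smul_apply]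
      rw [← smul_add, ← smul_add, map_smul, h1]
  -- extend to all of L by tensor induction
  induction x using TensorProduct.induction_on with
  | zero => simp
  | tmul p a =>
    induction y using TensorProduct.induction_on with
    | zero => simp
    | tmul r b => exact key2 p r a b
    | add y1 y2 h1 h2 =>
      simp only [map_add, h1, h2]
      abel
  | add x1 x2 h1 h2 =>
    simp only [map_add, LinearMap.add_apply, h1, h2]
    abel
end

section
/- Suppose φ, ψ : ℂ → ℂ are rational functions (defined everywhere relevant) satisfying φ(-λ)(ψ(-λ) - ψ(λ+μ)) = (2ψ(μ)ψ(-λ) + φ(μ))(ψ(λ+μ) - ψ(-λ)) for all λ, μ, together with ψ(μ)² = -φ(μ) obtained by specialization. Then ψ and φ are both constant functions. -/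
/-- If rational functions `φ, ψ : ℂ → ℂ` (defined everywhere relevant) satisfy
`φ(-λ)(ψ(-λ) - ψ(λ+μ)) = (2ψ(μ)ψ(-λ) + φ(μ))(ψ(λ+μ) - ψ(-λ))` for all `λ, μ`,
together with `ψ(μ)² = -φ(μ)`, then `ψ` and `φ` are both constant. -/
theorem stmt18 (φ ψ : ℂ → ℂ)
    (hφ : ∃ p r : Polynomial ℂ, (∀ x : ℂ, r.eval x ≠ 0) ∧
      ∀ x : ℂ, φ x = p.eval x / r.eval x)
    (hψ : ∃ p r : Polynomial ℂ, (∀ x : ℂ, r.eval x ≠ 0) ∧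
      ∀ x : ℂ, ψ x = p.eval x / r.eval x)
    (hmain : ∀ l m : ℂ,
      φ (-l) * (ψ (-l) - ψ (l + m)) = (2 * ψ m * ψ (-l) + φ m) * (ψ (l + m) - ψ (-l)))
    (hsq : ∀ m : ℂ, ψ m ^ 2 = -φ m) :
    (∃ c : ℂ, ∀ x : ℂ, ψ x = c) ∧ (∃ c : ℂ, ∀ x : ℂ, φ x = c) := by
  have hc : ∀ m : ℂ, ψ m = ψ 0 := by
    intro m
    have h := hmain 0 m
    simp only [neg_zero, zero_add] at h
    have hcube : (ψ m - ψ 0) ^ 3 = 0 := by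
      linear_combination h + (ψ m - ψ 0) * hsq 0 + (ψ m - ψ 0) * hsq m
    have := pow_eq_zero_iff (n := 3) (by norm_num) |>.mp hcube
    exact sub_eq_zero.mp this
  refine ⟨⟨ψ 0, hc⟩, ⟨-(ψ 0) ^ 2, fun x => ?_⟩⟩
  have := hsq x
  rw [hc x] at this
  linear_combination this
end
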